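/- Let 0 < α < β < ∞, let b : [0,∞) → ℝ be continuous with b(a) = 0 for a ∉ [α,β], and let μ : [0,∞) → ℝ be continuous and nonnegative. For Δ > 0 define the inherent net reproductive number of the associated Leslie matrix model G(Δ) = Δ·∑_{i=q}^{s−1} b(iΔ)·exp(−Δ·∑_{j=0}^{i−1} μ(jΔ)), where q = ⌊α/Δ⌋ and s = ⌊β/Δ⌋. Then G(Δ) → r = ∫_α^β b(c)·exp(−∫₀^c μ(s) ds) dc as Δ → 0⁺; that is, in the limit of vanishing age-class length, the inherent net reproductive number of the Leslie discrete model converges to the Lotka growth rate. -/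

import Mathlib

/-!
Both sums in `G(Δ)` are left Riemann sums. The inner one, `Δ·∑_{j<i} μ(jΔ)`, approximates
`∫₀^{iΔ} μ` uniformly in the `i` with `iΔ ≤ β`, and `exp` is `1`-Lipschitz on `(-∞, 0]`, so
replacing it by the integral changes `G(Δ)` by `o(1)`. What remains is the left Riemann sum of
`c ↦ b(c)·exp(-∫₀^c μ)` on `[0, ⌊β/Δ⌋Δ]`, which tends to its integral over `[0, β]`; that
integral is `r` because `b` vanishes below `α`.
-/

open MeasureTheory Real Set Filter Finset Topology

theorem abs_exp_sub_exp_le_of_nonpos {a b : ℝ} (ha : a ≤ 0) (hb : b ≤ 0) :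
    |exp a - exp b| ≤ |a - b| := by
  wlog hab : a ≤ b generalizing a b
  · rw [abs_sub_comm, abs_sub_comm a]
    exact this hb ha (le_of_not_ge hab)
  have hfactor : exp b - exp a = exp b * (1 - exp (-(b - a))) := by
    rw [mul_sub, ← exp_add]; ring_nf
  rw [abs_sub_comm, abs_of_nonneg (sub_nonneg.2 (exp_le_exp.2 hab)), abs_sub_comm,
    abs_of_nonneg (sub_nonneg.2 hab), hfactor]
  calc exp b * (1 - exp (-(b - a))) ≤ 1 * (b - a) :=
        mul_le_mul (exp_le_one_iff.2 hb) (by linarith [one_sub_le_exp_neg (b - a)])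
          (sub_nonneg.2 (exp_le_one_iff.2 (by linarith))) zero_le_one
    _ = b - a := one_mul _

theorem tendsto_zero_of_forall_eventually_abs_le_mul {ι : Type*} {l : Filter ι} {u : ι → ℝ}
    (C : ℝ) (h : ∀ ε > 0, ∀ᶠ x in l, |u x| ≤ C * ε) : Tendsto u l (𝓝 0) := by
  rw [Metric.tendsto_nhds]
  intro ε hε
  filter_upwards [h (ε / (|C| + 1)) (by positivity)] with x hx
  rw [Real.dist_0_eq_abs]
  calc |u x| ≤ |C| * (ε / (|C| + 1)) :=
        hx.trans (mul_le_mul_of_nonneg_right (le_abs_self C) (by positivity))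
    _ < ε := by
      rw [mul_div_assoc', div_lt_iff₀ (by positivity)]
      nlinarith [abs_nonneg C]

theorem natFloor_div_mul_le {β Δ : ℝ} (hβ : 0 ≤ β) (hΔ : 0 < Δ) : ⌊β / Δ⌋₊ * Δ ≤ β :=
  (le_div_iff₀ hΔ).1 (Nat.floor_le (by positivity))

theorem tendsto_natFloor_div_mul_nhdsGT {β : ℝ} (hβ : 0 ≤ β) :
    Tendsto (fun Δ => ⌊β / Δ⌋₊ * Δ) (𝓝[>] 0) (𝓝 β) := by
  have hlower : Tendsto (fun Δ : ℝ => β - Δ) (𝓝[>] 0) (𝓝 β) :=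
    ((continuous_const.sub continuous_id).tendsto' 0 β (sub_zero β)).mono_left
      nhdsWithin_le_nhds
  refine tendsto_of_tendsto_of_tendsto_of_le_of_le' hlower tendsto_const_nhds ?_ ?_
  all_goals filter_upwards [self_mem_nhdsWithin] with Δ (hΔ : 0 < Δ)
  · have := (div_lt_iff₀ hΔ).1 (Nat.lt_floor_add_one (β / Δ))
    linarith
  · exact natFloor_div_mul_le hβ hΔ

theorem sum_Ico_natFloor_eq_sum_range {α β Δ : ℝ} (hαβ : α ≤ β) (hΔ : 0 < Δ) {g : ℕ → ℝ}
    (hg : ∀ i : ℕ, i * Δ < α → g i = 0) :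
    ∑ i ∈ Ico ⌊α / Δ⌋₊ ⌊β / Δ⌋₊, g i = ∑ i ∈ range ⌊β / Δ⌋₊, g i := by
  rw [← sum_range_add_sum_Ico _ (Nat.floor_mono (div_le_div_of_nonneg_right hαβ hΔ.le)),
    right_eq_add]
  exact sum_eq_zero fun i hi => hg i ((lt_div_iff₀ hΔ).1 (Nat.lt_of_lt_floor (mem_range.1 hi)))

section LeftRiemannSum

noncomputable def leftRiemannSum (f : ℝ → ℝ) (Δ : ℝ) (n : ℕ) : ℝ :=
  Δ * ∑ j ∈ range n, f (j * Δ)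

variable {f : ℝ → ℝ} {Δ ε : ℝ}

theorem abs_mul_sub_integral_le {a : ℝ} (hf : IntervalIntegrable f volume a (a + Δ))
    (hΔ : 0 ≤ Δ) (h : ∀ t ∈ Icc a (a + Δ), |f t - f a| ≤ ε) :
    |Δ * f a - ∫ t in a..a + Δ, f t| ≤ Δ * ε := by
  have hconst : Δ * f a = ∫ _ in a..a + Δ, f a := by simp
  rw [hconst, ← intervalIntegral.integral_sub intervalIntegrable_const hf, ← Real.norm_eq_abs]
  refine (intervalIntegral.norm_integral_le_of_norm_le_const (C := ε) fun t ht => ?_).trans_eq ?_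
  · rw [uIoc_of_le (by linarith)] at ht
    rw [Real.norm_eq_abs, abs_sub_comm]
    exact h t (Ioc_subset_Icc_self ht)
  · rw [add_sub_cancel_left, abs_of_nonneg hΔ, mul_comm]

theorem abs_leftRiemannSum_sub_integral_le (hf : Continuous f) (hΔ : 0 ≤ Δ) (n : ℕ)
    (h : ∀ j < n, ∀ t ∈ Icc (j * Δ) (j * Δ + Δ), |f t - f (j * Δ)| ≤ ε) :
    |leftRiemannSum f Δ n - ∫ t in 0..n * Δ, f t| ≤ n * Δ * ε := by
  induction n with
  | zero => simp [leftRiemannSum]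
  | succ n ih =>
    have hsplit : leftRiemannSum f Δ (n + 1) - ∫ t in 0..(n + 1 : ℕ) * Δ, f t
        = (leftRiemannSum f Δ n - ∫ t in 0..n * Δ, f t)
          + (Δ * f (n * Δ) - ∫ t in n * Δ..n * Δ + Δ, f t) := by
      rw [show ((n + 1 : ℕ) : ℝ) * Δ = n * Δ + Δ by push_cast; ring,
        ← intervalIntegral.integral_add_adjacent_intervals (hf.intervalIntegrable 0 (n * Δ))
          (hf.intervalIntegrable _ _), leftRiemannSum, leftRiemannSum, sum_range_succ]
      ring
    calc _ ≤ _ := hsplit ▸ abs_add_le _ _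
      _ ≤ n * Δ * ε + Δ * ε :=
        add_le_add (ih fun j hj => h j (hj.trans n.lt_succ_self))
          (abs_mul_sub_integral_le (hf.intervalIntegrable _ _) hΔ (h n n.lt_succ_self))
      _ = _ := by push_cast; ring

theorem eventually_forall_abs_leftRiemannSum_sub_integral_le (hf : Continuous f) (β : ℝ)
    (hε : 0 < ε) :
    ∀ᶠ Δ in 𝓝[>] 0, ∀ n : ℕ, n * Δ ≤ β →
      |leftRiemannSum f Δ n - ∫ t in 0..n * Δ, f t| ≤ n * Δ * ε := by
  obtain ⟨δ, hδ, hfδ⟩ := Metric.uniformContinuousOn_iff.1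
    ((isCompact_Icc (a := 0) (b := β)).uniformContinuousOn_of_continuous hf.continuousOn) ε hε
  filter_upwards [Ioo_mem_nhdsGT hδ] with Δ ⟨hΔ, hΔδ⟩ n hn
  refine abs_leftRiemannSum_sub_integral_le hf hΔ.le n fun j hj t ht => ?_
  have hj0 : 0 ≤ j * Δ := by positivity
  have hjβ : j * Δ + Δ ≤ β := by
    have : ((j + 1 : ℕ) : ℝ) * Δ ≤ n * Δ := by gcongr; exact_mod_cast hj
    push_cast at this
    linarith
  rw [← Real.dist_eq]
  refine (hfδ t ⟨hj0.trans ht.1, ht.2.trans hjβ⟩ _ ⟨hj0, by linarith⟩ ?_).le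
  rw [Real.dist_eq, abs_of_nonneg (by linarith [ht.1])]
  linarith [ht.2]

theorem tendsto_leftRiemannSum_natFloor (hf : Continuous f) {β : ℝ} (hβ : 0 ≤ β) :
    Tendsto (fun Δ => leftRiemannSum f Δ ⌊β / Δ⌋₊) (𝓝[>] 0) (𝓝 (∫ t in 0..β, f t)) := by
  have herr : Tendsto (fun Δ => leftRiemannSum f Δ ⌊β / Δ⌋₊ - ∫ t in 0..⌊β / Δ⌋₊ * Δ, f t)
      (𝓝[>] 0) (𝓝 0) := by
    refine tendsto_zero_of_forall_eventually_abs_le_mul β fun ε hε => ?_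
    filter_upwards [eventually_forall_abs_leftRiemannSum_sub_integral_le hf β hε,
      self_mem_nhdsWithin] with Δ hR (hΔ : 0 < Δ)
    exact (hR _ (natFloor_div_mul_le hβ hΔ)).trans
      (mul_le_mul_of_nonneg_right (natFloor_div_mul_le hβ hΔ) hε.le)
  have hint : Tendsto (fun Δ => ∫ t in 0..⌊β / Δ⌋₊ * Δ, f t) (𝓝[>] 0) (𝓝 (∫ t in 0..β, f t)) :=
    ((intervalIntegral.continuous_primitive (fun _ _ => hf.intervalIntegrable _ _) 0).tendsto
      β).comp (tendsto_natFloor_div_mul_nhdsGT hβ)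
  simpa using herr.add hint

end LeftRiemannSum

theorem tendsto_sum_mul_exp_neg_leftRiemannSum_sub {b μ : ℝ → ℝ} {β : ℝ}
    (hb : ContinuousOn b (Icc 0 β)) (hμ : Continuous μ) (hμ0 : ∀ x, 0 ≤ μ x) (hβ : 0 ≤ β) :
    Tendsto (fun Δ => Δ * ∑ i ∈ range ⌊β / Δ⌋₊, b (i * Δ) * exp (-leftRiemannSum μ Δ i)
        - leftRiemannSum (fun c => b c * exp (-∫ t in 0..c, μ t)) Δ ⌊β / Δ⌋₊)
      (𝓝[>] 0) (𝓝 0) := by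
  obtain ⟨B, hB⟩ := isCompact_Icc.exists_bound_of_continuousOn hb
  have hB0 : 0 ≤ B := (norm_nonneg _).trans (hB 0 ⟨le_rfl, hβ⟩)
  refine tendsto_zero_of_forall_eventually_abs_le_mul (β * B * β) fun ε hε => ?_
  filter_upwards [eventually_forall_abs_leftRiemannSum_sub_integral_le hμ β hε,
    self_mem_nhdsWithin] with Δ hR (hΔ : 0 < Δ)
  have hterm : ∀ i ∈ range ⌊β / Δ⌋₊, |b (i * Δ) * exp (-leftRiemannSum μ Δ i)
      - b (i * Δ) * exp (-∫ t in 0..i * Δ, μ t)| ≤ B * (β * ε) := by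
    intro i hi
    have hiβ : i * Δ ≤ β := (mul_le_mul_of_nonneg_right (by exact_mod_cast (mem_range.1 hi).le)
      hΔ.le).trans (natFloor_div_mul_le hβ hΔ)
    rw [← mul_sub, abs_mul]
    refine mul_le_mul (hB _ ⟨by positivity, hiβ⟩) ?_ (abs_nonneg _) hB0
    calc _ ≤ |-leftRiemannSum μ Δ i - -∫ t in 0..i * Δ, μ t| :=
          abs_exp_sub_exp_le_of_nonpos
            (neg_nonpos.2 (mul_nonneg hΔ.le (sum_nonneg fun j _ => hμ0 _)))
            (neg_nonpos.2 (intervalIntegral.integral_nonneg (by positivity) fun x _ => hμ0 x))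
      _ = |leftRiemannSum μ Δ i - ∫ t in 0..i * Δ, μ t| := by rw [neg_sub_neg, abs_sub_comm]
      _ ≤ i * Δ * ε := hR i hiβ
      _ ≤ β * ε := mul_le_mul_of_nonneg_right hiβ hε.le
  calc _ = Δ * |∑ i ∈ range ⌊β / Δ⌋₊, (b (i * Δ) * exp (-leftRiemannSum μ Δ i)
        - b (i * Δ) * exp (-∫ t in 0..i * Δ, μ t))| := by
        rw [leftRiemannSum, ← mul_sub, ← sum_sub_distrib, abs_mul, abs_of_pos hΔ]
    _ ≤ Δ * ∑ _i ∈ range ⌊β / Δ⌋₊, B * (β * ε) :=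
        mul_le_mul_of_nonneg_left ((abs_sum_le_sum_abs _ _).trans (sum_le_sum hterm)) hΔ.le
    _ = ⌊β / Δ⌋₊ * Δ * (B * (β * ε)) := by rw [sum_const, card_range, nsmul_eq_mul]; ring
    _ ≤ β * (B * (β * ε)) :=
        mul_le_mul_of_nonneg_right (natFloor_div_mul_le hβ hΔ) (by positivity)
    _ = β * B * β * ε := by ring

theorem leslie_net_reproductive_number_tendsto_lotka_growth_rate
    (α β : ℝ) (hα : 0 < α) (hαβ : α < β)
    (b : ℝ → ℝ) (hbc : Continuous b) (hbsupp : ∀ a, a ∉ Set.Icc α β → b a = 0)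
    (μ : ℝ → ℝ) (hμc : Continuous μ) (hμ0 : ∀ x, 0 ≤ μ x)
    (G : ℝ → ℝ)
    (hG : ∀ Δ : ℝ, 0 < Δ →
      G Δ = Δ * ∑ i ∈ Finset.Ico (⌊α / Δ⌋).toNat (⌊β / Δ⌋).toNat,
        b ((i : ℝ) * Δ) *
          Real.exp (-(Δ * ∑ j ∈ Finset.range i, μ ((j : ℝ) * Δ))))
    (r : ℝ)
    (hr : r = ∫ c in α..β, b c * Real.exp (-(∫ s in (0:ℝ)..c, μ s))) :
    Filter.Tendsto G (nhdsWithin 0 (Set.Ioi 0)) (nhds r) := by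
  have hβ : 0 ≤ β := hα.le.trans hαβ.le
  have hb_lt : ∀ x < α, b x = 0 := fun x hx => hbsupp x fun h => hx.not_ge h.1
  set F : ℝ → ℝ := fun c => b c * exp (-∫ s in (0:ℝ)..c, μ s)
  have hF : Continuous F := hbc.mul (continuous_exp.comp
    (intervalIntegral.continuous_primitive (fun _ _ => hμc.intervalIntegrable _ _) 0).neg)
  have hr_F : r = ∫ c in 0..β, F c := by
    have hF_zero : ∫ c in 0..α, F c = 0 := intervalIntegral.integral_zero_ae <| by
      filter_upwards [Measure.ae_ne volume α] with x hxα hx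
      simp [F, hb_lt x (lt_of_le_of_ne (uIoc_of_le hα.le ▸ hx).2 hxα)]
    rw [hr, ← intervalIntegral.integral_add_adjacent_intervals (hF.intervalIntegrable 0 α)
      (hF.intervalIntegrable α β), hF_zero, zero_add]
  have hG_range : G =ᶠ[𝓝[>] 0]
      fun Δ => Δ * ∑ i ∈ range ⌊β / Δ⌋₊, b (i * Δ) * exp (-leftRiemannSum μ Δ i) := by
    filter_upwards [self_mem_nhdsWithin] with Δ (hΔ : 0 < Δ)
    rw [hG Δ hΔ, Int.floor_toNat, Int.floor_toNat,
      sum_Ico_natFloor_eq_sum_range hαβ.le hΔ fun i hi => by rw [hb_lt _ hi, zero_mul]]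
    rfl
  rw [hr_F, tendsto_congr' hG_range]
  have hlim := (tendsto_sum_mul_exp_neg_leftRiemannSum_sub hbc.continuousOn hμc hμ0 hβ).add
    (tendsto_leftRiemannSum_natFloor hF hβ)
  rw [zero_add] at hlim
  exact hlim.congr fun Δ => sub_add_cancel _ _
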